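/- arXiv:2409.12529 — 5 statements merged into one kernel-verified Lean document; each statement's English description precedes it below -/
import Mathlib

section
/- For every natural number k, the following identity holds in the polynomial ring Q[x,y]: Σ_{n=0}^{k} ((−1)^{k−n} x^{k−n}/(k−n)!) · Σ_{i=0}^{n} x^i y^{2n−2i+1}/(i! (2n−2i+1)!!) = y^{2k+1}/(2k+1)!!. -/
/-!
In terms of generating functions in `t`, the inner sum is the `t^n`-coefficient of
`exp(x t) · F(t)` with `F(t) = Σ_m y^{2m+1} t^m / (2m+1)!!`, and the outer sum is the
`t^k`-coefficient of `exp(-x t) · exp(x t) · F(t) = F(t)`.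
-/

open MvPolynomial Finset

/-- `x` in `ℚ[x,y]`. -/
noncomputable def xP : MvPolynomial (Fin 2) ℚ := X 0
/-- `y` in `ℚ[x,y]`. -/
noncomputable def yP : MvPolynomial (Fin 2) ℚ := X 1

section ExpInverse

open PowerSeries

variable {A : Type*} [CommRing A] [Algebra ℚ A]

theorem PowerSeries.coeff_rescale_exp (c : A) (n : ℕ) :
    PowerSeries.coeff n (rescale c (exp A)) = ((1 : ℚ) / n.factorial) • c ^ n := by
  rw [coeff_rescale, coeff_exp, Algebra.smul_def, mul_comm]

theorem sum_neg_exp_mul_sum_exp_mul (x : A) (f : ℕ → A) (k : ℕ) :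
    ∑ n ∈ range (k + 1), (((-1 : ℚ) ^ (k - n) / (k - n).factorial) • x ^ (k - n)) *
      ∑ i ∈ range (n + 1), (((1 : ℚ) / i.factorial) • x ^ i) * f (n - i) = f k := by
  have hinv : rescale x (exp A) * mk f * rescale (-x) (exp A) = mk f := by
    rw [mul_right_comm, exp_mul_exp_eq_exp_add, add_neg_cancel, rescale_zero]
    simp
  have hcoeff := congrArg (PowerSeries.coeff k) hinv
  simp only [PowerSeries.coeff_mul, Finset.Nat.sum_antidiagonal_eq_sum_range_succ_mk,
    coeff_rescale_exp, PowerSeries.coeff_mk] at hcoeff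
  rw [← hcoeff]
  refine Finset.sum_congr rfl fun n _ => ?_
  rw [mul_comm, ← neg_one_smul ℚ x, smul_pow, smul_smul, one_div_mul_eq_div]

end ExpInverse

/-- For every natural number `k`,
`Σ_{n=0}^{k} ((−1)^{k−n} x^{k−n}/(k−n)!) · Σ_{i=0}^{n} x^i y^{2n−2i+1}/(i! (2n−2i+1)!!)
  = y^{2k+1}/(2k+1)!!` in `ℚ[x,y]`. -/
theorem stmt0 (k : ℕ) :
    ∑ n ∈ Finset.range (k + 1),
      (((-1 : ℚ) ^ (k - n) / (k - n).factorial) • xP ^ (k - n)) *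
        ∑ i ∈ Finset.range (n + 1),
          ((1 : ℚ) / (i.factorial * (2 * n - 2 * i + 1).doubleFactorial)) •
            (xP ^ i * yP ^ (2 * n - 2 * i + 1))
    = ((1 : ℚ) / (2 * k + 1).doubleFactorial) • yP ^ (2 * k + 1) := by
  have hterm (n i : ℕ) :
      ((1 : ℚ) / (i.factorial * (2 * n - 2 * i + 1).doubleFactorial)) •
          (xP ^ i * yP ^ (2 * n - 2 * i + 1))
        = (((1 : ℚ) / i.factorial) • xP ^ i) *
            (((1 : ℚ) / (2 * (n - i) + 1).doubleFactorial) • yP ^ (2 * (n - i) + 1)) := by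
    rw [Nat.mul_sub, smul_mul_smul_comm, one_div_mul_one_div]
  simp only [hterm]
  exact sum_neg_exp_mul_sum_exp_mul xP
    (fun m => ((1 : ℚ) / (2 * m + 1).doubleFactorial) • yP ^ (2 * m + 1)) k
end

section
/- For m ≥ 0 define α_m := (−1)^{m+1} Σ_{i=0}^{m} x^i y^{2m−2i+1}/(2^{m−i} i! (m−i)! (2m−2i+1)) ∈ Q[x,y]. Then for every natural number k, the identity Σ_{n=0}^{k} (1/n!) (x + y²/2)^n α_{k−n} = − y^{2k+1}/(2k+1)!! holds in Q[x,y]. -/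
open MvPolynomial Finset

/-- `α_m := (−1)^{m+1} Σ_{i=0}^{m} x^i y^{2m−2i+1}/(2^{m−i} i! (m−i)! (2m−2i+1))`. -/
noncomputable def alphaP (m : ℕ) : MvPolynomial (Fin 2) ℚ :=
  ∑ i ∈ Finset.range (m + 1),
    ((-1 : ℚ) ^ (m + 1) / (2 ^ (m - i) * i.factorial * (m - i).factorial * (2 * m - 2 * i + 1))) •
      (xP ^ i * yP ^ (2 * m - 2 * i + 1))

/-! In a formal variable `t`, `∑ₘ αₘ tᵐ = -e^{-xt} ∫₀^y e^{-ts²/2} ds`. Multiplying by `e^{(x + y²/2)t}`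
cancels `x` and leaves `-∫₀^y e^{t(y²-s²)/2} ds`, whose `tᵏ`-coefficient is
`-y^{2k+1}/(2ᵏ k!) · ∑ₚ (-1)ᵖ C(k,p)/(2p+1)`. That alternating sum is the partial-fraction expansion
`∑ₚ (-1)ᵖ C(k,p)/(z+p) = k!/(z(z+1)⋯(z+k))` at `z = 1/2`, that is `2ᵏ k!/(2k+1)!!`. -/

open Nat

section AlternatingSum

variable {K : Type*} [Field K]

theorem ascPochhammer_eval_ne_zero {z : K} (hz : ∀ n : ℕ, z + n ≠ 0) (k : ℕ) :
    (ascPochhammer K k).eval z ≠ 0 := by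
  rw [Ne, ascPochhammer_eval_eq_zero_iff]
  rintro ⟨n, -, hn⟩
  exact hz n (by rw [hn, add_neg_cancel])

theorem sum_range_neg_one_pow_mul_choose_div_add (k : ℕ) {z : K} (hz : ∀ n : ℕ, z + n ≠ 0) :
    ∑ p ∈ range (k + 1), (-1) ^ p * k.choose p / (z + p) =
      k ! / (ascPochhammer K (k + 1)).eval z := by
  induction k generalizing z with
  | zero => simp
  | succ k ih =>
    have hz1 : ∀ n : ℕ, z + 1 + n ≠ 0 := fun n => by
      simpa [add_assoc, add_comm (1 : K)] using hz (n + 1)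
    have pascal : ∑ p ∈ range (k + 2), (-1) ^ p * (k + 1).choose p / (z + p) =
        ∑ p ∈ range (k + 1), (-1) ^ p * k.choose p / (z + p) -
          ∑ p ∈ range (k + 1), (-1) ^ p * k.choose p / (z + 1 + p) := by
      rw [sub_eq_add_neg, ← sum_neg_distrib]
      have := sum_choose_succ_mul (R := K) (fun p _ => (-1 : K) ^ p / (z + p)) k
      convert this using 2 <;> try refine sum_congr rfl fun p _ => ?_
      all_goals push_cast; ring
    have eval_left : (ascPochhammer K (k + 1)).eval z = z * (ascPochhammer K k).eval (z + 1) := by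
      simp [ascPochhammer_succ_left, Polynomial.eval_comp]
    rw [pascal, ih hz, ih hz1, ascPochhammer_succ_eval (k + 1) z, eval_left,
      ascPochhammer_succ_eval k (z + 1)]
    have hz0 : z ≠ 0 := by simpa using hz 0
    have hz1k := hz1 k
    have hzk := hz (k + 1)
    have hQ := ascPochhammer_eval_ne_zero hz1 k
    rw [Nat.factorial_succ]
    push_cast at *
    field_simp
    ring

theorem ascPochhammer_eval_half [CharZero K] (k : ℕ) :
    (ascPochhammer K (k + 1)).eval (1 / 2) = (2 * k + 1)‼ / 2 ^ (k + 1) := by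
  induction k with
  | zero => simp
  | succ k ih =>
    rw [ascPochhammer_succ_eval, ih, show 2 * (k + 1) + 1 = 2 * k + 1 + 2 by ring,
      doubleFactorial_add_two]
    push_cast
    field_simp
    ring

theorem sum_range_neg_one_pow_mul_choose_div_two_mul_add_one [CharZero K] (k : ℕ) :
    ∑ p ∈ range (k + 1), (-1) ^ p * k.choose p / (2 * p + 1 : K) = 2 ^ k * k ! / (2 * k + 1)‼ := by
  have hz (n : ℕ) : (1 / 2 : K) + n ≠ 0 := by
    rw [show (1 / 2 : K) + n = (2 * n + 1 : ℕ) / 2 by push_cast; ring]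
    exact div_ne_zero (Nat.cast_ne_zero.mpr (by omega)) two_ne_zero
  have hodd : ((2 * k + 1)‼ : K) ≠ 0 := Nat.cast_ne_zero.mpr (doubleFactorial_pos _).ne'
  calc ∑ p ∈ range (k + 1), (-1) ^ p * k.choose p / (2 * p + 1 : K)
      = 1 / 2 * ∑ p ∈ range (k + 1), (-1) ^ p * k.choose p / (1 / 2 + p : K) := by
        rw [mul_sum]
        refine sum_congr rfl fun p _ => ?_
        rw [one_div_mul_eq_div, div_div]
        ring
    _ = 2 ^ k * k ! / (2 * k + 1)‼ := by
        rw [sum_range_neg_one_pow_mul_choose_div_add k hz, ascPochhammer_eval_half]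
        field_simp
        ring

end AlternatingSum

section GaussIntegralSeries

variable {R : Type*} [CommRing R] [Algebra ℚ R]

theorem PowerSeries.coeff_rescale_exp_s1 (a : R) (n : ℕ) :
    coeff n (rescale a (exp R)) = (1 / n ! : ℚ) • a ^ n := by
  rw [coeff_rescale, coeff_exp, Algebra.smul_def, mul_comm]

/-- `∫₀^y exp(-t s²/2) ds`, expanded in powers of `t`. -/
noncomputable def gaussIntegralSeries (y : R) : PowerSeries R :=
  PowerSeries.mk fun p => ((-1) ^ p / (2 ^ p * p ! * (2 * p + 1)) : ℚ) • y ^ (2 * p + 1)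

theorem coeff_rescale_exp_mul_gaussIntegralSeries (y : R) (k : ℕ) :
    PowerSeries.coeff k (PowerSeries.rescale ((1 / 2 : ℚ) • y ^ 2) (PowerSeries.exp R) *
      gaussIntegralSeries y) = (1 / (2 * k + 1)‼ : ℚ) • y ^ (2 * k + 1) := by
  rw [mul_comm, PowerSeries.coeff_mul, Nat.sum_antidiagonal_eq_sum_range_succ
    (fun p q => PowerSeries.coeff p (gaussIntegralSeries y) *
      PowerSeries.coeff q (PowerSeries.rescale ((1 / 2 : ℚ) • y ^ 2) (PowerSeries.exp R)))]
  calc _ = ∑ p ∈ range (k + 1),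
        ((-1) ^ p * k.choose p / (2 * p + 1) / (2 ^ k * k ! : ℚ)) • y ^ (2 * k + 1) := by
        refine sum_congr rfl fun p hp => ?_
        obtain ⟨q, rfl⟩ := Nat.exists_eq_add_of_le (Nat.lt_succ_iff.mp (mem_range.mp hp))
        rw [gaussIntegralSeries, PowerSeries.coeff_mk, PowerSeries.coeff_rescale_exp_s1,
          Nat.add_sub_cancel_left, smul_pow, one_div_pow, smul_smul, smul_mul_smul_comm, ← pow_mul,
          ← pow_add, show 2 * p + 1 + 2 * q = 2 * (p + q) + 1 by ring, Nat.cast_add_choose]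
        congr 1
        field_simp
        ring
    _ = (1 / (2 * k + 1)‼ : ℚ) • y ^ (2 * k + 1) := by
        rw [← sum_smul, ← sum_div, sum_range_neg_one_pow_mul_choose_div_two_mul_add_one]
        have : (k ! : ℚ) ≠ 0 := by positivity
        field_simp

end GaussIntegralSeries

theorem alphaP_eq_neg_coeff (m : ℕ) :
    alphaP m = -PowerSeries.coeff m
      (PowerSeries.rescale (-xP) (PowerSeries.exp _) * gaussIntegralSeries yP) := by
  rw [PowerSeries.coeff_mul, Nat.sum_antidiagonal_eq_sum_range_succ
    (fun i p => PowerSeries.coeff i (PowerSeries.rescale (-xP) (PowerSeries.exp _)) *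
      PowerSeries.coeff p (gaussIntegralSeries yP)), alphaP, ← sum_neg_distrib]
  refine sum_congr rfl fun i hi => ?_
  obtain ⟨p, rfl⟩ := Nat.exists_eq_add_of_le (Nat.lt_succ_iff.mp (mem_range.mp hi))
  rw [gaussIntegralSeries, PowerSeries.coeff_mk, PowerSeries.coeff_rescale_exp_s1,
    Nat.add_sub_cancel_left, ← neg_one_smul ℚ xP, smul_pow, smul_smul, smul_mul_smul_comm,
    ← neg_smul, show 2 * (i + p) - 2 * i + 1 = 2 * p + 1 by omega]
  congr 1
  rw [show (2 : ℚ) * (i + p : ℕ) - 2 * i + 1 = 2 * p + 1 by push_cast; ring]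
  field_simp
  ring

/-- For every natural number `k`,
`Σ_{n=0}^{k} (1/n!) (x + y²/2)^n α_{k−n} = − y^{2k+1}/(2k+1)!!` in `ℚ[x,y]`. -/
theorem stmt1 (k : ℕ) :
    ∑ n ∈ Finset.range (k + 1),
      ((1 : ℚ) / n.factorial) • ((xP + ((1 : ℚ) / 2) • yP ^ 2) ^ n * alphaP (k - n))
    = -(((1 : ℚ) / (2 * k + 1).doubleFactorial) • yP ^ (2 * k + 1)) := by
  have alpha_series : PowerSeries.mk alphaP =
      -(PowerSeries.rescale (-xP) (PowerSeries.exp _) * gaussIntegralSeries yP) := by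
    ext m
    rw [PowerSeries.coeff_mk, alphaP_eq_neg_coeff, map_neg]
  calc _ = PowerSeries.coeff k (PowerSeries.rescale (xP + ((1 : ℚ) / 2) • yP ^ 2)
        (PowerSeries.exp _) * PowerSeries.mk alphaP) := by
        rw [PowerSeries.coeff_mul, Nat.sum_antidiagonal_eq_sum_range_succ
          (fun n m => PowerSeries.coeff n (PowerSeries.rescale (xP + ((1 : ℚ) / 2) • yP ^ 2)
            (PowerSeries.exp _)) * PowerSeries.coeff m (PowerSeries.mk alphaP))]
        simp only [PowerSeries.coeff_rescale_exp_s1, PowerSeries.coeff_mk, smul_mul_assoc]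
    _ = -PowerSeries.coeff k (PowerSeries.rescale ((1 / 2 : ℚ) • yP ^ 2) (PowerSeries.exp _) *
        gaussIntegralSeries yP) := by
        rw [alpha_series, mul_neg, ← mul_assoc, PowerSeries.exp_mul_exp_eq_exp_add,
          add_neg_cancel_comm, map_neg]
    _ = _ := by rw [coeff_rescale_exp_mul_gaussIntegralSeries]
end

section
/- For every k ≥ 1 there exists a family of polynomials c_{d,λ,μ}(z,y) ∈ Q[z,y], indexed by integers d with 1 ≤ d ≤ k and pairs of partitions (λ, μ) with |λ| + |μ| = k − d, such that each c_{d,λ,μ} is homogeneous of degree k + ℓ(λ) + ℓ(μ) + 1 in (z,y), and such that in K: J_k = Σ_{d=1}^{k} Σ_{(λ,μ), |λ|+|μ|=k−d} c_{d,λ,μ}(v_1^{−1}, u_1^{−1}) · r_d · Π_{i=1}^{ℓ(λ)} v_{λ_i+1} · Π_{j=1}^{ℓ(μ)} u_{μ_j+1}, where u_1 := v_1 + r_0 r_1 and u_{j+1} := ∂(u_j) for j ≥ 1, and ℓ denotes the number of parts of a partition. -/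
open Finset

/-- The field `K`: field of fractions of `ℚ[v_0, r_0, v_1, r_1, …]`. -/
abbrev KBKdV : Type := FractionRing (MvPolynomial (ℕ ⊕ ℕ) ℚ)

/-- The indeterminate `v_k`, viewed in `K`. -/
noncomputable def vK (k : ℕ) : KBKdV :=
  algebraMap (MvPolynomial (ℕ ⊕ ℕ) ℚ) KBKdV (MvPolynomial.X (Sum.inl k))

/-- The indeterminate `r_k`, viewed in `K`. -/
noncomputable def rK (k : ℕ) : KBKdV :=
  algebraMap (MvPolynomial (ℕ ⊕ ℕ) ℚ) KBKdV (MvPolynomial.X (Sum.inr k))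

/-!
Write `z = v₁⁻¹`, `y = u₁⁻¹` and give a monomial `z^a y^b ∏ v_{λᵢ+1} ∏ u_{μⱼ+1}` (positive parts)
the weight `|λ| + |μ|` and the excess `a + b - ℓ(λ) - ℓ(μ)`. Since `∂z = -z²v₂`, `∂y = -y²u₂`,
`∂v_{p+1} = v_{p+2}` and `∂u_{p+1} = u_{p+2}`, `∂` sends each factor to weight one higher and the
same excess, so by Leibniz it maps the span of weight `w` and excess `e` to weight `w + 1` and
excess `e`, while multiplication by `z` or `y` raises the excess by one. Along the recursions,
`I_{n+1} - δ_{n,0}` therefore has weight `n` and excess `n + 1`, and `J_k` is a sum of `r_d` times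
elements of weight `k - d` and excess `k + 1` (using `∂r_d = r_{d+1}`). The polynomial
`c_{d,λ,μ}` collects the coefficients of the `z^a y^b` with `a + b = k + ℓ(λ) + ℓ(μ) + 1`.
-/

variable {F : Type*} [Field F]

section JetSpan

variable (v u : ℕ → F)

def jetMonomial (a b : ℕ) (lam mu : Multiset ℕ) : F :=
  (v 1)⁻¹ ^ a * (u 1)⁻¹ ^ b * (lam.map fun p => v (p + 1)).prod *
    (mu.map fun p => u (p + 1)).prod

lemma jetMonomial_mul (a b a' b' : ℕ) (lam mu lam' mu' : Multiset ℕ) :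
    jetMonomial v u a b lam mu * jetMonomial v u a' b' lam' mu' =
      jetMonomial v u (a + a') (b + b') (lam + lam') (mu + mu') := by
  simp only [jetMonomial, Multiset.map_add, Multiset.prod_add, pow_add]
  ring

variable [Algebra ℚ F]

def jetSpan (w : ℕ) (e : ℤ) : Submodule ℚ F :=
  Submodule.span ℚ {x | ∃ a b lam mu, (∀ p ∈ lam, 0 < p) ∧ (∀ p ∈ mu, 0 < p) ∧
    lam.sum + mu.sum = w ∧ ((a + b : ℕ) : ℤ) = e + Multiset.card lam + Multiset.card mu ∧
    x = jetMonomial v u a b lam mu}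

variable {v u}

lemma jetMonomial_mem_jetSpan {a b w : ℕ} {e : ℤ} {lam mu : Multiset ℕ}
    (hlam : ∀ p ∈ lam, 0 < p) (hmu : ∀ p ∈ mu, 0 < p) (hw : lam.sum + mu.sum = w)
    (he : ((a + b : ℕ) : ℤ) = e + Multiset.card lam + Multiset.card mu) :
    jetMonomial v u a b lam mu ∈ jetSpan v u w e :=
  Submodule.subset_span ⟨a, b, lam, mu, hlam, hmu, hw, he, rfl⟩

lemma mul_mem_jetSpan {x y : F} {w w' : ℕ} {e e' : ℤ} (hx : x ∈ jetSpan v u w e)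
    (hy : y ∈ jetSpan v u w' e') : x * y ∈ jetSpan v u (w + w') (e + e') := by
  have hxy := Submodule.mul_mem_mul hx hy
  rw [jetSpan, jetSpan, Submodule.span_mul_span] at hxy
  refine Submodule.span_mono ?_ hxy
  rintro _ ⟨_, ⟨a, b, lam, mu, hlam, hmu, hw, he, rfl⟩, _,
    ⟨a', b', lam', mu', hlam', hmu', hw', he', rfl⟩, rfl⟩
  refine ⟨a + a', b + b', lam + lam', mu + mu', ?_, ?_, ?_, ?_, jetMonomial_mul ..⟩
  · simpa [or_imp, forall_and] using ⟨hlam, hlam'⟩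
  · simpa [or_imp, forall_and] using ⟨hmu, hmu'⟩
  · rw [Multiset.sum_add, Multiset.sum_add]
    omega
  · push_cast [Multiset.card_add] at he he' ⊢
    linarith

lemma jetSpan_le_jetSpan_swap (w : ℕ) (e : ℤ) : jetSpan v u w e ≤ jetSpan u v w e := by
  refine Submodule.span_mono ?_
  rintro _ ⟨a, b, lam, mu, hlam, hmu, hw, he, rfl⟩
  exact ⟨b, a, mu, lam, hmu, hlam, by omega, by omega, by simp only [jetMonomial]; ring⟩

lemma jetSpan_swap (w : ℕ) (e : ℤ) : jetSpan u v w e = jetSpan v u w e :=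
  le_antisymm (jetSpan_le_jetSpan_swap w e) (jetSpan_le_jetSpan_swap w e)

lemma inv_v_mem_jetSpan : (v 1)⁻¹ ∈ jetSpan v u 0 1 := by
  have h : jetMonomial v u 1 0 0 0 = (v 1)⁻¹ := by simp [jetMonomial]
  exact h ▸ jetMonomial_mem_jetSpan (by simp) (by simp) (by simp) (by simp)

lemma mul_inv_v_mem_jetSpan {x : F} {w : ℕ} {e : ℤ} (hx : x ∈ jetSpan v u w e) :
    x * (v 1)⁻¹ ∈ jetSpan v u w (e + 1) :=
  add_zero w ▸ mul_mem_jetSpan hx inv_v_mem_jetSpan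

lemma mul_inv_u_mem_jetSpan {x : F} {w : ℕ} {e : ℤ} (hx : x ∈ jetSpan v u w e) :
    x * (u 1)⁻¹ ∈ jetSpan v u w (e + 1) := by
  rw [← jetSpan_swap] at hx ⊢
  exact mul_inv_v_mem_jetSpan hx

end JetSpan

section Derivation

variable [Algebra ℚ F] (D : Derivation ℚ F F) (v u : ℕ → F)

def IsDiffHomogeneous (w : ℕ) (e : ℤ) (x : F) : Prop :=
  x ∈ jetSpan v u w e ∧ D x ∈ jetSpan v u (w + 1) e

variable {D v u}

lemma IsDiffHomogeneous.swap {w : ℕ} {e : ℤ} {x : F} (hx : IsDiffHomogeneous D v u w e x) :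
    IsDiffHomogeneous D u v w e x := by
  rwa [IsDiffHomogeneous, jetSpan_swap (v := v) (u := u), jetSpan_swap (v := v) (u := u)]

lemma IsDiffHomogeneous.mul {x y : F} {w w' : ℕ} {e e' : ℤ}
    (hx : IsDiffHomogeneous D v u w e x) (hy : IsDiffHomogeneous D v u w' e' y) :
    IsDiffHomogeneous D v u (w + w') (e + e') (x * y) := by
  refine ⟨mul_mem_jetSpan hx.1 hy.1, ?_⟩
  rw [Derivation.leibniz, smul_eq_mul, smul_eq_mul]
  refine add_mem ?_ ?_
  · convert mul_mem_jetSpan hx.1 hy.2 using 2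
    ring
  · convert mul_mem_jetSpan hy.1 hx.2 using 2 <;> ring

lemma isDiffHomogeneous_one : IsDiffHomogeneous D v u 0 0 1 := by
  have h : jetMonomial v u 0 0 0 0 = 1 := by simp [jetMonomial]
  exact ⟨h ▸ jetMonomial_mem_jetSpan (by simp) (by simp) (by simp) (by simp), by simp⟩

lemma IsDiffHomogeneous.pow {x : F} {w : ℕ} {e : ℤ} (hx : IsDiffHomogeneous D v u w e x) :
    ∀ n : ℕ, IsDiffHomogeneous D v u (n * w) (n * e) (x ^ n)
  | 0 => by simpa using isDiffHomogeneous_one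
  | n + 1 => by
    rw [pow_succ]
    convert (hx.pow n).mul hx using 1 <;> push_cast <;> ring

lemma isDiffHomogeneous_multiset_prod (g : ℕ → F) (l : Multiset ℕ)
    (hg : ∀ p ∈ l, IsDiffHomogeneous D v u p (-1) (g p)) :
    IsDiffHomogeneous D v u l.sum (-Multiset.card l) (l.map g).prod := by
  induction l using Multiset.induction_on with
  | empty => simpa using isDiffHomogeneous_one
  | cons p l ih =>
    rw [Multiset.map_cons, Multiset.prod_cons]
    convert (hg p (Multiset.mem_cons_self p l)).mul
      (ih fun q hq => hg q (Multiset.mem_cons_of_mem hq)) using 1 <;> simp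

variable (hv : ∀ j, 1 ≤ j → D (v j) = v (j + 1))
include hv

lemma isDiffHomogeneous_inv_v : IsDiffHomogeneous D v u 0 1 (v 1)⁻¹ := by
  refine ⟨inv_v_mem_jetSpan, ?_⟩
  have hD : D (v 1)⁻¹ = -jetMonomial v u 2 0 {1} 0 := by
    simp [jetMonomial, Derivation.leibniz_inv, hv 1 le_rfl]
  rw [hD]
  exact neg_mem (jetMonomial_mem_jetSpan (by simp) (by simp) (by simp) (by simp))

lemma isDiffHomogeneous_v_succ {p : ℕ} (hp : 0 < p) :
    IsDiffHomogeneous D v u p (-1) (v (p + 1)) := by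
  have hmon (q : ℕ) : v (q + 1) = jetMonomial v u 0 0 {q} 0 := by simp [jetMonomial]
  refine ⟨?_, ?_⟩
  · rw [hmon]
    exact jetMonomial_mem_jetSpan (by simpa) (by simp) (by simp) (by simp)
  · rw [hv (p + 1) (by omega), hmon]
    exact jetMonomial_mem_jetSpan (by simp) (by simp) (by simp) (by simp)

variable (hu : ∀ j, 1 ≤ j → D (u j) = u (j + 1))
include hu

lemma isDiffHomogeneous_jetMonomial (a b : ℕ) {lam mu : Multiset ℕ}
    (hlam : ∀ p ∈ lam, 0 < p) (hmu : ∀ p ∈ mu, 0 < p) :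
    IsDiffHomogeneous D v u (lam.sum + mu.sum) (a + b - Multiset.card lam - Multiset.card mu)
      (jetMonomial v u a b lam mu) := by
  have hz := (isDiffHomogeneous_inv_v (u := u) hv).pow a
  have hy := ((isDiffHomogeneous_inv_v (u := v) hu).swap).pow b
  have hlam' := isDiffHomogeneous_multiset_prod (u := u) _ lam
    fun p hp => isDiffHomogeneous_v_succ hv (hlam p hp)
  have hmu' := (isDiffHomogeneous_multiset_prod (u := v) _ mu
    fun p hp => isDiffHomogeneous_v_succ hu (hmu p hp)).swap
  convert ((hz.mul hy).mul hlam').mul hmu' using 1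
  · simp
  · ring
  · rfl

lemma derivation_mem_jetSpan {x : F} {w : ℕ} {e : ℤ} (hx : x ∈ jetSpan v u w e) :
    D x ∈ jetSpan v u (w + 1) e := by
  suffices jetSpan v u w e ≤ (jetSpan v u (w + 1) e).comap (D : F →ₗ[ℚ] F) from this hx
  refine Submodule.span_le.mpr ?_
  rintro _ ⟨a, b, lam, mu, hlam, hmu, rfl, he, rfl⟩
  obtain rfl : e = a + b - Multiset.card lam - Multiset.card mu := by push_cast at he; linarith
  exact (isDiffHomogeneous_jetMonomial hv hu a b hlam hmu).2

end Derivation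

section Recursion

variable [Algebra ℚ F] {D : Derivation ℚ F F} {v u : ℕ → F} {I : ℕ → F}

lemma I_one_eq (hv1 : v 1 ≠ 0) (hv0 : D (v 0) = v 1) (hI0 : I 0 = v 0)
    (hI : ∀ k, I (k + 1) = (D (I k) - if k = 0 then 1 else 0) / v 1) :
    I 1 = 1 - (v 1)⁻¹ := by
  rw [hI 0, hI0, hv0, if_pos rfl]
  field_simp

lemma I_succ_sub_mem_jetSpan (hv : ∀ j, 1 ≤ j → D (v j) = v (j + 1))
    (hu : ∀ j, 1 ≤ j → D (u j) = u (j + 1)) (hv1 : v 1 ≠ 0) (hv0 : D (v 0) = v 1)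
    (hI0 : I 0 = v 0) (hI : ∀ k, I (k + 1) = (D (I k) - if k = 0 then 1 else 0) / v 1) :
    ∀ n : ℕ, I (n + 1) - (if n = 0 then 1 else 0) ∈ jetSpan v u n (n + 1)
  | 0 => by
    rw [I_one_eq hv1 hv0 hI0 hI, if_pos rfl, sub_sub_cancel_left]
    exact neg_mem inv_v_mem_jetSpan
  | n + 1 => by
    have hstep : I (n + 2) = D (I (n + 1) - if n = 0 then 1 else 0) * (v 1)⁻¹ := by
      have hconst : D (if n = 0 then 1 else 0) = 0 := by split_ifs <;> simp
      rw [hI, if_neg n.succ_ne_zero, sub_zero, div_eq_mul_inv, map_sub, hconst, sub_zero]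
    rw [if_neg n.succ_ne_zero, sub_zero, hstep]
    push_cast
    exact mul_inv_v_mem_jetSpan
      (derivation_mem_jetSpan hv hu (I_succ_sub_mem_jetSpan hv hu hv1 hv0 hI0 hI n))


variable (v u) (r : ℕ → F) in
def rJetSpan (k : ℕ) : Submodule ℚ F :=
  ⨆ d ∈ Icc 1 k, (jetSpan v u (k - d) (k + 1)).map (LinearMap.mulLeft ℚ (r d))

variable {r : ℕ → F}

lemma mul_mem_rJetSpan {k d : ℕ} (hd : d ∈ Icc 1 k) {x : F} (hx : x ∈ jetSpan v u (k - d) (k + 1)) :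
    r d * x ∈ rJetSpan v u r k :=
  Submodule.mem_iSup_of_mem d (Submodule.mem_iSup_of_mem hd ⟨x, hx, rfl⟩)

lemma derivation_mul_inv_mem_rJetSpan (hv : ∀ j, 1 ≤ j → D (v j) = v (j + 1))
    (hu : ∀ j, 1 ≤ j → D (u j) = u (j + 1)) (hr : ∀ d, D (r d) = r (d + 1)) {k : ℕ} {x : F}
    (hx : x ∈ rJetSpan v u r k) : D x * (u 1)⁻¹ ∈ rJetSpan v u r (k + 1) := by
  suffices rJetSpan v u r k ≤ (rJetSpan v u r (k + 1)).comap
      (LinearMap.mulRight ℚ (u 1)⁻¹ ∘ₗ (D : F →ₗ[ℚ] F)) from this hx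
  refine iSup₂_le fun d hd => Submodule.map_le_iff_le_comap.mpr fun y hy => ?_
  obtain ⟨hd1, hdk⟩ := mem_Icc.mp hd
  show D (r d * y) * (u 1)⁻¹ ∈ rJetSpan v u r (k + 1)
  have hleibniz :
      D (r d * y) * (u 1)⁻¹ = r (d + 1) * (y * (u 1)⁻¹) + r d * (D y * (u 1)⁻¹) := by
    rw [Derivation.leibniz, hr, smul_eq_mul, smul_eq_mul]
    ring
  rw [hleibniz]
  refine add_mem (mul_mem_rJetSpan (mem_Icc.mpr ⟨by omega, by omega⟩) ?_)
    (mul_mem_rJetSpan (mem_Icc.mpr ⟨hd1, by omega⟩) ?_)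
  · convert mul_inv_u_mem_jetSpan hy using 2 <;> push_cast <;> omega
  · convert mul_inv_u_mem_jetSpan (derivation_mem_jetSpan hv hu hy) using 2 <;> push_cast <;> omega

lemma J_mem_rJetSpan (hv : ∀ j, 1 ≤ j → D (v j) = v (j + 1))
    (hu : ∀ j, 1 ≤ j → D (u j) = u (j + 1)) (hr : ∀ d, D (r d) = r (d + 1))
    (hv1 : v 1 ≠ 0) (hv0 : D (v 0) = v 1) {J : ℕ → F} (hI0 : I 0 = v 0) (hJ0 : J 0 = r 0)
    (hI : ∀ k, I (k + 1) = (D (I k) - if k = 0 then 1 else 0) / v 1)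
    (hJ : ∀ k, J (k + 1) = (D (J k) - r 1 * I (k + 1)) / u 1) :
    ∀ k, 1 ≤ k → J k ∈ rJetSpan v u r k := by
  refine Nat.le_induction ?_ fun k hk ih => ?_
  · have hJ1 : J 1 = r 1 * jetMonomial v u 1 1 0 0 := by
      rw [hJ 0, hJ0, hr, I_one_eq hv1 hv0 hI0 hI, jetMonomial]
      simp only [Multiset.map_zero, Multiset.prod_zero]
      ring
    rw [hJ1]
    exact mul_mem_rJetSpan (by simp)
      (jetMonomial_mem_jetSpan (by simp) (by simp) (by simp) (by simp))
  · have hJk : J (k + 1) = D (J k) * (u 1)⁻¹ - r 1 * (I (k + 1) * (u 1)⁻¹) := by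
      rw [hJ, div_eq_mul_inv]
      ring
    have hIk := I_succ_sub_mem_jetSpan hv hu hv1 hv0 hI0 hI k
    rw [if_neg (by omega), sub_zero] at hIk
    rw [hJk]
    refine sub_mem (derivation_mul_inv_mem_rJetSpan hv hu hr ih)
      (mul_mem_rJetSpan (mem_Icc.mpr ⟨le_rfl, by omega⟩) ?_)
    convert mul_inv_u_mem_jetSpan hIk using 2
    · omega
    · push_cast
      ring

end Recursion

section PartitionExpansion

variable [Algebra ℚ F] (v u r : ℕ → F)

noncomputable def partitionExpansion (k : ℕ)
    (c : ℕ → Multiset ℕ → Multiset ℕ → MvPolynomial (Fin 2) ℚ) : F :=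
  ∑ d ∈ Icc 1 k, ∑ a ∈ range (k - d + 1), ∑ lam : a.Partition, ∑ mu : (k - d - a).Partition,
    MvPolynomial.aeval (fun i : Fin 2 => if i = 0 then (v 1)⁻¹ else (u 1)⁻¹)
        (c d lam.parts mu.parts) *
      r d * (lam.parts.map fun p => v (p + 1)).prod * (mu.parts.map fun p => u (p + 1)).prod

noncomputable def partitionExpansions (k : ℕ) : Submodule ℚ F where
  carrier := {x | ∃ c : ℕ → Multiset ℕ → Multiset ℕ → MvPolynomial (Fin 2) ℚ,
    (∀ d lp mp, (c d lp mp).IsHomogeneous (k + Multiset.card lp + Multiset.card mp + 1)) ∧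
      x = partitionExpansion v u r k c}
  zero_mem' := ⟨0, fun _ _ _ => MvPolynomial.isHomogeneous_zero _ _ _,
    by simp [partitionExpansion]⟩
  add_mem' := by
    rintro _ _ ⟨c, hc, rfl⟩ ⟨c', hc', rfl⟩
    exact ⟨c + c', fun d lp mp => (hc d lp mp).add (hc' d lp mp),
      by simp only [partitionExpansion, Pi.add_apply, map_add, add_mul, sum_add_distrib]⟩
  smul_mem' := by
    rintro q _ ⟨c, hc, rfl⟩
    refine ⟨q • c, fun d lp mp => ?_, ?_⟩
    · simpa [MvPolynomial.smul_eq_C_mul] using (hc d lp mp).C_mul q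
    · simp only [partitionExpansion, Pi.smul_apply, Algebra.smul_def, map_mul,
      AlgHom.commutes, mul_sum, mul_assoc]

variable {v u r}

lemma partitionExpansion_single {k d : ℕ} {lam mu : Multiset ℕ} (hd : 1 ≤ d)
    (hlam : ∀ p ∈ lam, 0 < p) (hmu : ∀ p ∈ mu, 0 < p) (hk : d + lam.sum + mu.sum = k)
    (P : MvPolynomial (Fin 2) ℚ) :
    partitionExpansion v u r k (fun d' lp mp => if d' = d ∧ lp = lam ∧ mp = mu then P else 0) =
      MvPolynomial.aeval (fun i : Fin 2 => if i = 0 then (v 1)⁻¹ else (u 1)⁻¹) P *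
        r d * (lam.map fun p => v (p + 1)).prod * (mu.map fun p => u (p + 1)).prod := by
  classical
  let lam' : lam.sum.Partition := ⟨lam, hlam _, rfl⟩
  let mu' : (k - d - lam.sum).Partition := ⟨mu, hmu _, by omega⟩
  rw [partitionExpansion, sum_eq_single_of_mem d (mem_Icc.mpr ⟨hd, by omega⟩),
    sum_eq_single_of_mem lam.sum (mem_range.mpr (by omega)),
    sum_eq_single_of_mem lam' (mem_univ _), sum_eq_single_of_mem mu' (mem_univ _),
    if_pos ⟨rfl, rfl, rfl⟩]
  · intro mu'' _ hne
    rw [if_neg fun h => hne (Nat.Partition.ext h.2.2), map_zero, zero_mul, zero_mul, zero_mul]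
  · intro lam'' _ hne
    refine sum_eq_zero fun mu'' _ => ?_
    rw [if_neg fun h => hne (Nat.Partition.ext h.2.1), map_zero, zero_mul, zero_mul, zero_mul]
  · intro a _ hne
    refine sum_eq_zero fun lam'' _ => sum_eq_zero fun mu'' _ => ?_
    rw [if_neg fun h => hne (by rw [← lam''.parts_sum, h.2.1]), map_zero, zero_mul, zero_mul,
      zero_mul]
  · intro d' _ hne
    refine sum_eq_zero fun a _ => sum_eq_zero fun lam'' _ => sum_eq_zero fun mu'' _ => ?_
    rw [if_neg fun h => hne h.1, map_zero, zero_mul, zero_mul, zero_mul]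

lemma mul_jetMonomial_mem_partitionExpansions {k d a b : ℕ} {lam mu : Multiset ℕ} (hd : 1 ≤ d)
    (hlam : ∀ p ∈ lam, 0 < p) (hmu : ∀ p ∈ mu, 0 < p) (hk : d + lam.sum + mu.sum = k)
    (hab : a + b = k + Multiset.card lam + Multiset.card mu + 1) :
    r d * jetMonomial v u a b lam mu ∈ partitionExpansions v u r k := by
  classical
  refine ⟨fun d' lp mp => if d' = d ∧ lp = lam ∧ mp = mu then
    MvPolynomial.X 0 ^ a * MvPolynomial.X 1 ^ b else 0, fun d' lp mp => ?_, ?_⟩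
  · dsimp only
    split_ifs with h
    · obtain ⟨-, rfl, rfl⟩ := h
      exact hab ▸ (MvPolynomial.isHomogeneous_X_pow _ a).mul (MvPolynomial.isHomogeneous_X_pow _ b)
    · exact MvPolynomial.isHomogeneous_zero _ _ _
  · rw [partitionExpansion_single hd hlam hmu hk]
    simp only [jetMonomial, map_mul, map_pow, MvPolynomial.aeval_X, if_pos, if_neg one_ne_zero]
    ring

lemma rJetSpan_le_partitionExpansions (k : ℕ) :
    rJetSpan v u r k ≤ partitionExpansions v u r k := by
  refine iSup₂_le fun d hd => Submodule.map_le_iff_le_comap.mpr <| Submodule.span_le.mpr ?_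
  rintro _ ⟨a, b, lam, mu, hlam, hmu, hw, he, rfl⟩
  obtain ⟨hd1, hdk⟩ := mem_Icc.mp hd
  exact mul_jetMonomial_mem_partitionExpansions hd1 hlam hmu (by omega) (by push_cast at he; omega)

end PartitionExpansion

/-- `FractionRing` has its own `ℚ`-module structure, not reducibly the one induced by `Algebra ℚ`,
so the derivation of the statement does not fit the lemmas above; additive maps of `ℚ`-vector
spaces being `ℚ`-linear, it is rebuilt from its additive map. -/
def Derivation.ofAddMonoidHom {F : Type*} [Field F] [Algebra ℚ F] (D : F →+ F)
    (hD : ∀ a b, D (a * b) = a * D b + b * D a) : Derivation ℚ F F :=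
  Derivation.mk' D.toRatLinearMap hD

/-- Lemma 2.1 (second part): for every `k ≥ 1` there exist polynomials
`c_{d,λ,μ}(z,y) ∈ ℚ[z,y]`, homogeneous of degree `k + ℓ(λ) + ℓ(μ) + 1`, with
`J_k = Σ_{d=1}^{k} Σ_{|λ|+|μ|=k−d} c_{d,λ,μ}(v_1⁻¹, u_1⁻¹) · r_d · Π_i v_{λ_i+1} · Π_j u_{μ_j+1}`
in `K`, where `u_1 = v_1 + r_0 r_1` and `u_{j+1} = ∂(u_j)`. -/
theorem stmt5
    (Dx : Derivation ℚ KBKdV KBKdV)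
    (hDxv : ∀ k, Dx (vK k) = vK (k + 1)) (hDxr : ∀ k, Dx (rK k) = rK (k + 1))
    (I J : ℕ → KBKdV) (hI0 : I 0 = vK 0) (hJ0 : J 0 = rK 0)
    (hI : ∀ k : ℕ, I (k + 1) = (Dx (I k) - if k = 0 then 1 else 0) / vK 1)
    (hJ : ∀ k : ℕ, J (k + 1) = (Dx (J k) - rK 1 * I (k + 1)) / (vK 1 + rK 0 * rK 1))
    (u : ℕ → KBKdV) (hu1 : u 1 = vK 1 + rK 0 * rK 1)
    (hu : ∀ j : ℕ, 1 ≤ j → u (j + 1) = Dx (u j))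
    (k : ℕ) (hk : 1 ≤ k) :
    ∃ c : ℕ → Multiset ℕ → Multiset ℕ → MvPolynomial (Fin 2) ℚ,
      (∀ d lp mp, (c d lp mp).IsHomogeneous (k + Multiset.card lp + Multiset.card mp + 1)) ∧
      J k = ∑ d ∈ Finset.Icc 1 k, ∑ a ∈ Finset.range (k - d + 1),
        ∑ lam ∈ (Finset.univ : Finset (a.Partition)),
          ∑ mu ∈ (Finset.univ : Finset ((k - d - a).Partition)),
            MvPolynomial.aeval
                (fun i : Fin 2 => if i = 0 then (vK 1)⁻¹ else (vK 1 + rK 0 * rK 1)⁻¹)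
                (c d lam.parts mu.parts) *
              rK d * (lam.parts.map fun p => vK (p + 1)).prod *
              (mu.parts.map fun p => u (p + 1)).prod := by
  have hv1 : vK 1 ≠ 0 := by
    rw [vK, Ne, IsFractionRing.to_map_eq_zero_iff]
    exact MvPolynomial.X_ne_zero _
  rw [← hu1] at hJ ⊢
  have hJk := J_mem_rJetSpan (D := .ofAddMonoidHom (Dx : KBKdV →+ KBKdV) Dx.leibniz)
    (fun j _ => hDxv j) (fun j hj => (hu j hj).symm) hDxr hv1 (hDxv 0) hI0 hJ0 hI hJ k hk
  exact rJetSpan_le_partitionExpansions k hJk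
end

section
/- For every integer n ≥ 1, the identity Σ_{i,j ≥ 0, i+j = n−1} (2i+1)!!·(2j+1)!!/(i!·j!) = n(n+1)·2^{n−2} holds in Q. -/
open Finset Nat

/-!
The numbers `a i = (2i+1)!!/i!` satisfy `(i+1) a (i+1) = (2i+3) a i`. For any sequence with a
first-order recurrence `(i+1) a (i+1) = (c i + d) a i`, counting the factor `m+1 = i+j` of the
convolution `S m = ∑_{i+j=m} a i a j` once through `i` and once through `j` gives
`(m+1) S (m+1) = (c m + 2d) S m`. With `c = 2`, `d = 3` this is solved by
`2 S m = (m+1)(m+2) 2^m`, i.e. `S` is the coefficient sequence of `(1-2x)^{-3}`.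
-/

theorem sum_antidiagonal_succ_mul_of_recurrence {K : Type*} [CommRing K] (a : ℕ → K) (c d : K)
    (ha : ∀ i : ℕ, ((i : K) + 1) * a (i + 1) = (c * i + d) * a i) (m : ℕ) :
    ((m : K) + 1) * ∑ p ∈ antidiagonal (m + 1), a p.1 * a p.2
      = (c * m + 2 * d) * ∑ p ∈ antidiagonal m, a p.1 * a p.2 := by
  have hfst : ∑ p ∈ antidiagonal (m + 1), (p.1 : K) * (a p.1 * a p.2)
      = ∑ p ∈ antidiagonal m, (c * p.1 + d) * (a p.1 * a p.2) := by
    rw [Nat.sum_antidiagonal_succ, Nat.cast_zero, zero_mul, zero_add]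
    refine sum_congr rfl fun p _ => ?_
    push_cast
    linear_combination a p.2 * ha p.1
  have hsnd : ∑ p ∈ antidiagonal (m + 1), (p.2 : K) * (a p.1 * a p.2)
      = ∑ p ∈ antidiagonal m, (c * p.2 + d) * (a p.1 * a p.2) := by
    rw [Nat.sum_antidiagonal_succ', Nat.cast_zero, zero_mul, zero_add]
    refine sum_congr rfl fun p _ => ?_
    push_cast
    linear_combination a p.1 * ha p.2
  calc ((m : K) + 1) * ∑ p ∈ antidiagonal (m + 1), a p.1 * a p.2
      = ∑ p ∈ antidiagonal (m + 1), ((p.1 : K) + p.2) * (a p.1 * a p.2) := by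
        rw [mul_sum]
        refine sum_congr rfl fun p hp => ?_
        rw [← Nat.cast_add, mem_antidiagonal.mp hp]
        push_cast
        ring
    _ = ∑ p ∈ antidiagonal m, ((c * p.1 + d) + (c * p.2 + d)) * (a p.1 * a p.2) := by
        simp only [add_mul, sum_add_distrib, hfst, hsnd]
    _ = (c * m + 2 * d) * ∑ p ∈ antidiagonal m, a p.1 * a p.2 := by
        rw [mul_sum]
        refine sum_congr rfl fun p hp => ?_
        rw [← mem_antidiagonal.mp hp]
        push_cast
        ring

/-- The coefficients of `(1 - 2x)^{-3/2} = ∑ (2i+1)!!/i! xⁱ`. -/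
noncomputable def oddDoubleFactorialDivFactorial (K : Type*) [Field K] (i : ℕ) : K :=
  (2 * i + 1)‼ / i !

section

variable {K : Type*} [Field K] [CharZero K]

theorem succ_mul_oddDoubleFactorialDivFactorial_succ (i : ℕ) :
    ((i : K) + 1) * oddDoubleFactorialDivFactorial K (i + 1)
      = (2 * i + 3) * oddDoubleFactorialDivFactorial K i := by
  have hfact : (i ! : K) ≠ 0 := mod_cast i.factorial_ne_zero
  rw [oddDoubleFactorialDivFactorial, oddDoubleFactorialDivFactorial,
    show 2 * (i + 1) + 1 = 2 * i + 1 + 2 by ring, Nat.doubleFactorial_add_two,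
    Nat.factorial_succ]
  push_cast
  field_simp
  ring

theorem two_mul_sum_antidiagonal_oddDoubleFactorialDivFactorial (m : ℕ) :
    2 * ∑ p ∈ antidiagonal m,
        oddDoubleFactorialDivFactorial K p.1 * oddDoubleFactorialDivFactorial K p.2
      = ((m : K) + 1) * (m + 2) * 2 ^ m := by
  induction m with
  | zero => simp [oddDoubleFactorialDivFactorial]
  | succ m ih =>
    have hrec := sum_antidiagonal_succ_mul_of_recurrence _ 2 3
      succ_mul_oddDoubleFactorialDivFactorial_succ (K := K) m
    have hm : (m : K) + 1 ≠ 0 := Nat.cast_add_one_ne_zero m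
    refine mul_left_cancel₀ hm ?_
    push_cast
    linear_combination 2 * hrec + (2 * (m : K) + 6) * ih

end

theorem stmt11_general (n : ℕ) :
    ∑ i ∈ Finset.range n,
      ((2 * i + 1).doubleFactorial * (2 * (n - 1 - i) + 1).doubleFactorial : ℚ) /
        (i.factorial * (n - 1 - i).factorial)
    = n * (n + 1) * (2 : ℚ) ^ ((n : ℤ) - 2) := by
  rcases n with _ | m
  · simp
  have hsum := two_mul_sum_antidiagonal_oddDoubleFactorialDivFactorial (K := ℚ) m
  rw [Nat.sum_antidiagonal_eq_sum_range_succ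
    (fun i j => oddDoubleFactorialDivFactorial ℚ i * oddDoubleFactorialDivFactorial ℚ j)] at hsum
  simp only [oddDoubleFactorialDivFactorial, _root_.div_mul_div_comm] at hsum
  have hpow : (2 : ℚ) ^ (((m + 1 : ℕ) : ℤ) - 2) = 2 ^ m / 2 := by
    rw [show ((m + 1 : ℕ) : ℤ) - 2 = m - 1 by push_cast; ring, zpow_sub₀ two_ne_zero,
      zpow_natCast, zpow_one]
  rw [hpow, Nat.add_sub_cancel]
  push_cast
  linear_combination hsum / 2

/-- For every integer `n ≥ 1`,
`Σ_{i+j=n−1} (2i+1)!!·(2j+1)!!/(i!·j!) = n(n+1)·2^{n−2}` in `ℚ`. -/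
theorem stmt11 (n : ℕ) (hn : 1 ≤ n) :
    ∑ i ∈ Finset.range n,
      ((2 * i + 1).doubleFactorial * (2 * (n - 1 - i) + 1).doubleFactorial : ℚ) /
        (i.factorial * (n - 1 - i).factorial)
    = n * (n + 1) * (2 : ℚ) ^ ((n : ℤ) - 2) :=
  stmt11_general n
end

section
/- Let F₂ ∈ F be the element F₂ := −r·u_2²/(6·u_1³) + (r_1·u_2 + 3r·u_3)/(24·u_1²) + r_1·(r_1² − u_2)/(24·(u_1 − r·r_1)·u_1) + r_2/(8·u_1) − r_2/(24·(u_1 − r·r_1)). Then E(F₂) = F₂ and D(F₂) = (3/2)·F₂. -/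
/-!
Both derivations are diagonal on the generators, with weights `ρ` on `r`, `kα + 2ρ` on `v_k` and
`kα + ρ` on `r_k`, where `(α, ρ) = (1, 0)` for `E` and `(1, -1/2)` for `D`. Eigenvectors of a
derivation multiply and divide like monomials (weights add and subtract), so each `u_k` has weight
`kα + 2ρ`, and each of the five summands of `F₂` has weight `α - ρ`.
-/

open Finset

/-- The field `F = ℚ(r, v_1, r_1, v_2, r_2, v_3, r_3)`. -/
abbrev FBKdV : Type := FractionRing (MvPolynomial (Fin 7) ℚ)

/-- The indeterminate `r`, viewed in `F`. -/
noncomputable def rF : FBKdV := algebraMap (MvPolynomial (Fin 7) ℚ) FBKdV (MvPolynomial.X 0)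
/-- The indeterminate `v_1`, viewed in `F`. -/
noncomputable def v1F : FBKdV := algebraMap (MvPolynomial (Fin 7) ℚ) FBKdV (MvPolynomial.X 1)
/-- The indeterminate `r_1`, viewed in `F`. -/
noncomputable def r1F : FBKdV := algebraMap (MvPolynomial (Fin 7) ℚ) FBKdV (MvPolynomial.X 2)
/-- The indeterminate `v_2`, viewed in `F`. -/
noncomputable def v2F : FBKdV := algebraMap (MvPolynomial (Fin 7) ℚ) FBKdV (MvPolynomial.X 3)
/-- The indeterminate `r_2`, viewed in `F`. -/
noncomputable def r2F : FBKdV := algebraMap (MvPolynomial (Fin 7) ℚ) FBKdV (MvPolynomial.X 4)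
/-- The indeterminate `v_3`, viewed in `F`. -/
noncomputable def v3F : FBKdV := algebraMap (MvPolynomial (Fin 7) ℚ) FBKdV (MvPolynomial.X 5)
/-- The indeterminate `r_3`, viewed in `F`. -/
noncomputable def r3F : FBKdV := algebraMap (MvPolynomial (Fin 7) ℚ) FBKdV (MvPolynomial.X 6)

/-- `u_1 := v_1 + r·r_1`. -/
noncomputable def u1F : FBKdV := v1F + rF * r1F
/-- `u_2 := v_2 + r_1² + r·r_2`. -/
noncomputable def u2F : FBKdV := v2F + r1F ^ 2 + rF * r2F
/-- `u_3 := v_3 + 3·r_1·r_2 + r·r_3`. -/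
noncomputable def u3F : FBKdV := v3F + 3 * r1F * r2F + rF * r3F

/-- The genus-2 open free energy `F^o_2` in jet variables. -/
noncomputable def F2BKdV : FBKdV :=
  -(rF * u2F ^ 2) / (6 * u1F ^ 3) + (r1F * u2F + 3 * rF * u3F) / (24 * u1F ^ 2) +
    r1F * (r1F ^ 2 - u2F) / (24 * (u1F - rF * r1F) * u1F) + r2F / (8 * u1F) -
    r2F / (24 * (u1F - rF * r1F))

namespace Derivation

section Weight

/- The `ℚ`-module structure of a `FractionRing` is not definitionally the one of
`DivisionRing.toRatAlgebra`, and derivations of `FBKdV` use the former: hence the separate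
`[Module R A]`, which no lemma below needs to relate to `[Algebra R A]`. -/
set_option linter.overlappingInstances false

variable {R A : Type*}

def HasWeight [CommSemiring R] [CommSemiring A] [Algebra R A] [Module R A]
    (D : Derivation R A A) (c a : A) : Prop :=
  D a = c * a

namespace HasWeight

section CommSemiring

variable [CommSemiring R] [CommSemiring A] [Algebra R A] [Module R A] {D : Derivation R A A}
  {a b c d : A}

theorem of_eq (ha : HasWeight D c a) (hcd : c = d) : HasWeight D d a :=
  hcd ▸ ha

theorem add (ha : HasWeight D c a) (hb : HasWeight D c b) : HasWeight D c (a + b) := by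
  rw [HasWeight, map_add, ha, hb, mul_add]

theorem mul (ha : HasWeight D c a) (hb : HasWeight D d b) : HasWeight D (c + d) (a * b) := by
  rw [HasWeight, leibniz, ha, hb, smul_eq_mul, smul_eq_mul]
  ring

theorem pow (ha : HasWeight D c a) (n : ℕ) : HasWeight D (n * c) (a ^ n) := by
  induction n with
  | zero => simp [HasWeight]
  | succ n ih =>
    rw [pow_succ]
    exact (ih.mul ha).of_eq (by push_cast; ring)

end CommSemiring

section Field

variable {K : Type*} [CommRing R] [Field K] [Algebra R K] [Module R K] {D : Derivation R K K}
  {a b c d : K}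

theorem neg (ha : HasWeight D c a) : HasWeight D c (-a) := by
  rw [HasWeight, map_neg, ha, mul_neg]

theorem sub (ha : HasWeight D c a) (hb : HasWeight D c b) : HasWeight D c (a - b) := by
  rw [sub_eq_add_neg]
  exact ha.add hb.neg

theorem inv (ha : HasWeight D c a) : HasWeight D (-c) a⁻¹ := by
  rcases eq_or_ne a 0 with rfl | ha0
  · simp [HasWeight]
  · rw [HasWeight, leibniz_inv, ha, smul_eq_mul]
    field_simp

theorem div (ha : HasWeight D c a) (hb : HasWeight D d b) : HasWeight D (c - d) (a / b) := by
  rw [div_eq_mul_inv, sub_eq_add_neg]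
  exact ha.mul hb.inv

end Field

end HasWeight

theorem hasWeight_ofNat [CommSemiring R] [CommSemiring A] [Algebra R A] [Module R A]
    (D : Derivation R A A) (n : ℕ) [n.AtLeastTwo] : HasWeight D 0 (OfNat.ofNat n : A) := by
  rw [HasWeight, zero_mul, ← Nat.cast_ofNat, map_natCast]

end Weight

end Derivation

open Derivation

section BurgersKdV

variable {Δ : Derivation ℚ FBKdV FBKdV} {α ρ : FBKdV}

theorem hasWeight_u1F (hr : HasWeight Δ ρ rF) (hv1 : HasWeight Δ (α + 2 * ρ) v1F)
    (hr1 : HasWeight Δ (α + ρ) r1F) : HasWeight Δ (α + 2 * ρ) u1F :=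
  hv1.add ((hr.mul hr1).of_eq (by ring))

theorem hasWeight_u2F (hr : HasWeight Δ ρ rF) (hv2 : HasWeight Δ (2 * α + 2 * ρ) v2F)
    (hr1 : HasWeight Δ (α + ρ) r1F) (hr2 : HasWeight Δ (2 * α + ρ) r2F) :
    HasWeight Δ (2 * α + 2 * ρ) u2F :=
  (hv2.add ((hr1.pow 2).of_eq (by push_cast; ring))).add ((hr.mul hr2).of_eq (by ring))

theorem hasWeight_u3F (hr : HasWeight Δ ρ rF) (hv3 : HasWeight Δ (3 * α + 2 * ρ) v3F)
    (hr1 : HasWeight Δ (α + ρ) r1F) (hr2 : HasWeight Δ (2 * α + ρ) r2F)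
    (hr3 : HasWeight Δ (3 * α + ρ) r3F) : HasWeight Δ (3 * α + 2 * ρ) u3F :=
  (hv3.add ((((hasWeight_ofNat Δ 3).mul hr1).mul hr2).of_eq (by ring))).add
    ((hr.mul hr3).of_eq (by ring))

theorem hasWeight_F2BKdV (hr : HasWeight Δ ρ rF)
    (hv1 : HasWeight Δ (α + 2 * ρ) v1F) (hv2 : HasWeight Δ (2 * α + 2 * ρ) v2F)
    (hv3 : HasWeight Δ (3 * α + 2 * ρ) v3F) (hr1 : HasWeight Δ (α + ρ) r1F)
    (hr2 : HasWeight Δ (2 * α + ρ) r2F) (hr3 : HasWeight Δ (3 * α + ρ) r3F) :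
    HasWeight Δ (α - ρ) F2BKdV := by
  have hu1 := hasWeight_u1F hr hv1 hr1
  have hu2 := hasWeight_u2F hr hv2 hr1 hr2
  have hu3 := hasWeight_u3F hr hv3 hr1 hr2 hr3
  have hv1' : HasWeight Δ (α + 2 * ρ) (u1F - rF * r1F) := by rwa [u1F, add_sub_cancel_right]
  have h3 := hasWeight_ofNat Δ 3
  have h6 := hasWeight_ofNat Δ 6
  have h8 := hasWeight_ofNat Δ 8
  have h24 := hasWeight_ofNat Δ 24
  unfold F2BKdV
  refine (((HasWeight.add ?_ ?_).add ?_).add ?_).sub ?_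
  · exact ((hr.mul (hu2.pow 2)).neg.div (h6.mul (hu1.pow 3))).of_eq (by push_cast; ring)
  · have hnum := (hr1.mul hu2).add (((h3.mul hr).mul hu3).of_eq (by ring))
    exact (hnum.div (h24.mul (hu1.pow 2))).of_eq (by push_cast; ring)
  · have hnum := hr1.mul (((hr1.pow 2).of_eq (by push_cast; ring)).sub hu2)
    exact (hnum.div ((h24.mul hv1').mul hu1)).of_eq (by ring)
  · exact (hr2.div (h8.mul hu1)).of_eq (by ring)
  · exact (hr2.div (h24.mul hv1')).of_eq (by ring)

end BurgersKdV

/-- Homogeneity conditions of Theorem 1.1 for `p = 2`: `E(F₂) = F₂` and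
`D(F₂) = (3/2)·F₂`, where `E` is the derivation of `F` with `E(r) = 0`,
`E(v_k) = k·v_k`, `E(r_k) = k·r_k`, and `D` the derivation with `D(r) = −r/2`,
`D(v_k) = (k−1)·v_k`, `D(r_k) = (k−1/2)·r_k` (k = 1, 2, 3). -/
theorem stmt16 (E D : Derivation ℚ FBKdV FBKdV)
    (hEr : E rF = 0)
    (hEv1 : E v1F = v1F) (hEv2 : E v2F = 2 * v2F) (hEv3 : E v3F = 3 * v3F)
    (hEr1 : E r1F = r1F) (hEr2 : E r2F = 2 * r2F) (hEr3 : E r3F = 3 * r3F)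
    (hDr : D rF = -(1 / 2 : FBKdV) * rF)
    (hDv1 : D v1F = 0) (hDv2 : D v2F = v2F) (hDv3 : D v3F = 2 * v3F)
    (hDr1 : D r1F = (1 / 2 : FBKdV) * r1F) (hDr2 : D r2F = (3 / 2 : FBKdV) * r2F)
    (hDr3 : D r3F = (5 / 2 : FBKdV) * r3F) :
    E F2BKdV = F2BKdV ∧ D F2BKdV = (3 / 2 : FBKdV) * F2BKdV := by
  constructor
  · refine Eq.trans (hasWeight_F2BKdV (α := 1) (ρ := 0) ?_ ?_ ?_ ?_ ?_ ?_ ?_) (by ring)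
    all_goals (simp only [HasWeight, hEr, hEv1, hEv2, hEv3, hEr1, hEr2, hEr3]; ring)
  · refine Eq.trans (hasWeight_F2BKdV (α := 1) (ρ := -(1 / 2)) ?_ ?_ ?_ ?_ ?_ ?_ ?_) (by ring)
    all_goals simp only [HasWeight, hDr, hDv1, hDv2, hDv3, hDr1, hDr2, hDr3] <;> ring
end
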